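/- On M = ℝ² with the symmetries s_{(a,ℓ)}(a′,ℓ′) = (2a − a′, 2cosh(a − a′)ℓ − ℓ′), for every triple of points x, y, z ∈ M the equation s_x(s_y(s_z(t))) = t has exactly one solution t ∈ M. (This is the assertion of Section 8.3 that the triple-point map Φ is globally defined on this symmetric space, so Weinstein's function S_can is everywhere defined on M × M × M.) -/

import Mathlib

/-!
Every symmetry `s_x` has the shape `(p, q) ↦ (α - p, g p - q)`: it reverses both coordinates, the
first by a point reflection and the second up to a shift depending on `p`. Maps of this shape are
closed under composing three of them, and each has exactly one fixed point, `(α / 2, g (α / 2) / 2)`.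
-/

/-- The symmetry `s_{(a,ℓ)}(a',ℓ') = (2a - a', 2cosh(a - a')ℓ - ℓ')`. -/
noncomputable def symmPoincare (x y : ℝ × ℝ) : ℝ × ℝ :=
  (2 * x.1 - y.1, 2 * Real.cosh (x.1 - y.1) * x.2 - y.2)

def skewReflection (α : ℝ) (g : ℝ → ℝ) (t : ℝ × ℝ) : ℝ × ℝ :=
  (α - t.1, g t.1 - t.2)

theorem skewReflection_skewReflection_skewReflection (α β γ : ℝ) (f g h : ℝ → ℝ) (t : ℝ × ℝ) :
    skewReflection α f (skewReflection β g (skewReflection γ h t)) =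
      skewReflection (α - β + γ) (fun p => f (β - γ + p) - g (γ - p) + h p) t := by
  simp only [skewReflection, Prod.mk.injEq]
  constructor <;> ring_nf

theorem existsUnique_skewReflection_eq_self (α : ℝ) (g : ℝ → ℝ) :
    ∃! t : ℝ × ℝ, skewReflection α g t = t := by
  refine ⟨(α / 2, g (α / 2) / 2), ?_, ?_⟩
  · simp only [skewReflection, Prod.mk.injEq]
    constructor <;> ring
  · rintro ⟨p, q⟩ h
    simp only [skewReflection, Prod.mk.injEq] at h
    obtain ⟨hp, hq⟩ := h
    obtain rfl : p = α / 2 := by linarith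
    rw [Prod.mk.injEq]
    constructor <;> linarith

theorem symmPoincare_eq_skewReflection (x : ℝ × ℝ) :
    symmPoincare x = skewReflection (2 * x.1) (fun p => 2 * Real.cosh (x.1 - p) * x.2) :=
  rfl

/-- for every triple of points `x, y, z`, the equation
`s_x(s_y(s_z(t))) = t` has exactly one solution `t`. -/
theorem triple_point_equation_unique_solution :
    ∀ x y z : ℝ × ℝ, ∃! t : ℝ × ℝ,
      symmPoincare x (symmPoincare y (symmPoincare z t)) = t := by
  intro x y z
  simp only [symmPoincare_eq_skewReflection, skewReflection_skewReflection_skewReflection]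
  exact existsUnique_skewReflection_eq_self _ _
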